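/- Let k ≥ 1 and let σ be a page request sequence using at most k+1 distinct pages, processed by the furthest-in-the-future (Bélády) policy with cache size k starting from a full cache consisting of k of these pages. If the policy faults at two consecutive fault times s < t (with no fault strictly between them), then t − s ≥ k; consequently, on any such sequence of length T the policy faults at most ⌈T/k⌉ times. -/
import Mathlib


/-- The time (as an element of `ℕ∞`, so `⊤` if there is none) of the next request for
page `q` at or after time `t` in the request sequence `σ` of length `T`. -/
noncomputable def nextReq (σ : ℕ → ℕ) (T t q : ℕ) : ℕ∞ :=
  sInf ((fun u : ℕ => (u : ℕ∞)) '' {u : ℕ | t ≤ u ∧ u < T ∧ σ u = q})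

/-- The page evicted by the furthest-in-the-future (Bélády) policy on a fault at time `t`
with full cache `C`: a cached page whose next request (strictly after `t`) lies furthest
in the future; in particular a page that is never requested again is evicted
if one exists. -/
noncomputable def beladyEvict (σ : ℕ → ℕ) (T t : ℕ) (C : Finset ℕ) : ℕ := by
  classical
  exact if h : ∃ q ∈ C, ∀ r ∈ C, nextReq σ T (t + 1) r ≤ nextReq σ T (t + 1) q
    then h.choose else 0

/-- The cache of the furthest-in-the-future (Bélády) policy with cache size `k` on the
request sequence `σ` of length `T`, starting from the initial cache `C₀`, just before the
request at (0-based) time `t`. -/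
noncomputable def beladyCache (k : ℕ) (σ : ℕ → ℕ) (T : ℕ) (C₀ : Finset ℕ) :
    ℕ → Finset ℕ
  | 0 => C₀
  | t + 1 =>
    let C := beladyCache k σ T C₀ t
    let p := σ t
    if p ∈ C then C
    else if C.card < k then insert p C
    else insert p (C.erase (beladyEvict σ T t C))

lemma nextReq_le_iff (σ : ℕ → ℕ) (T a q n : ℕ) :
    nextReq σ T a q ≤ (n : ℕ∞) ↔ ∃ u, a ≤ u ∧ u < T ∧ σ u = q ∧ u ≤ n := by
  constructor
  · intro h
    by_contra hc
    push_neg at hc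
    have h1 : ((n + 1 : ℕ) : ℕ∞) ≤ nextReq σ T a q := by
      apply le_sInf
      rintro x ⟨u, ⟨h1, h2, h3⟩, rfl⟩
      show ((n + 1 : ℕ) : ℕ∞) ≤ ((u : ℕ) : ℕ∞)
      exact_mod_cast hc u h1 h2 h3
    have h2 : ((n + 1 : ℕ) : ℕ∞) ≤ (n : ℕ∞) := h1.trans h
    have : n + 1 ≤ n := by exact_mod_cast h2
    omega
  · rintro ⟨u, h1, h2, h3, h4⟩
    calc nextReq σ T a q ≤ (u : ℕ∞) := sInf_le ⟨u, ⟨h1, h2, h3⟩, rfl⟩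
    _ ≤ (n : ℕ∞) := by exact_mod_cast h4

lemma beladyEvict_spec (σ : ℕ → ℕ) (T t : ℕ) (C : Finset ℕ) (hC : C.Nonempty) :
    beladyEvict σ T t C ∈ C ∧
      ∀ r ∈ C, nextReq σ T (t + 1) r ≤ nextReq σ T (t + 1) (beladyEvict σ T t C) := by
  have h : ∃ q ∈ C, ∀ r ∈ C, nextReq σ T (t + 1) r ≤ nextReq σ T (t + 1) q :=
    C.exists_max_image _ hC
  unfold beladyEvict
  rw [dif_pos h]
  exact h.choose_spec

lemma beladyCache_succ (k : ℕ) (σ : ℕ → ℕ) (T : ℕ) (C₀ : Finset ℕ) (t : ℕ) :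
    beladyCache k σ T C₀ (t + 1) =
      if σ t ∈ beladyCache k σ T C₀ t then beladyCache k σ T C₀ t
      else if (beladyCache k σ T C₀ t).card < k then insert (σ t) (beladyCache k σ T C₀ t)
      else insert (σ t)
        ((beladyCache k σ T C₀ t).erase (beladyEvict σ T t (beladyCache k σ T C₀ t))) :=
  rfl

lemma beladyCache_card (k : ℕ) (hk : 1 ≤ k) (σ : ℕ → ℕ) (T : ℕ) (C₀ : Finset ℕ)
    (hcard : C₀.card = k) : ∀ t, (beladyCache k σ T C₀ t).card = k := by
  intro t
  induction t with
  | zero => exact hcard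
  | succ t ih =>
    rw [beladyCache_succ]
    set C := beladyCache k σ T C₀ t with hC
    by_cases hp : σ t ∈ C
    · rw [if_pos hp]; exact ih
    · rw [if_neg hp, if_neg (by omega)]
      have hne : C.Nonempty := Finset.card_pos.mp (by omega)
      have hq := (beladyEvict_spec σ T t C hne).1
      rw [Finset.card_insert_of_notMem (fun h => hp (Finset.mem_of_mem_erase h)),
        Finset.card_erase_of_mem hq, ih]
      omega

lemma beladyCache_subset (k : ℕ) (σ : ℕ → ℕ) (T : ℕ) (C₀ : Finset ℕ) :
    ∀ t, t ≤ T → beladyCache k σ T C₀ t ⊆ C₀ ∪ (Finset.range T).image σ := by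
  intro t
  induction t with
  | zero => intro _; exact Finset.subset_union_left
  | succ t ih =>
    intro hT
    have ih' := ih (by omega)
    have hσt : σ t ∈ C₀ ∪ (Finset.range T).image σ := by
      apply Finset.mem_union_right
      exact Finset.mem_image.mpr ⟨t, Finset.mem_range.mpr (by omega), rfl⟩
    rw [beladyCache_succ]
    set C := beladyCache k σ T C₀ t with hC
    by_cases hp : σ t ∈ C
    · rw [if_pos hp]; exact ih'
    · rw [if_neg hp]
      by_cases hlt : C.card < k
      · rw [if_pos hlt]
        exact Finset.insert_subset hσt ih'
      · rw [if_neg hlt]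
        exact Finset.insert_subset hσt ((Finset.erase_subset _ _).trans ih')

lemma beladyCache_stable (k : ℕ) (σ : ℕ → ℕ) (T : ℕ) (C₀ : Finset ℕ) (a : ℕ) :
    ∀ v, a ≤ v → (∀ w, a ≤ w → w < v → σ w ∈ beladyCache k σ T C₀ w) →
      beladyCache k σ T C₀ v = beladyCache k σ T C₀ a := by
  intro v hav
  induction v, hav using Nat.le_induction with
  | base => intro _; rfl
  | succ v hav ih =>
    intro hmid
    have hhit : σ v ∈ beladyCache k σ T C₀ v := hmid v hav (by omega)
    rw [beladyCache_succ, if_pos hhit]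
    exact ih (fun w hw hw' => hmid w hw (by omega))

/-- The main gap lemma. -/
lemma belady_gap (k : ℕ) (hk : 1 ≤ k) (σ : ℕ → ℕ) (T : ℕ)
    (C₀ : Finset ℕ) (hcard : C₀.card = k)
    (hpages : (C₀ ∪ (Finset.range T).image σ).card ≤ k + 1)
    (s t : ℕ) (hst : s < t) (htT : t < T)
    (hs : σ s ∉ beladyCache k σ T C₀ s) (ht : σ t ∉ beladyCache k σ T C₀ t)
    (hmid : ∀ u, s < u → u < t → σ u ∈ beladyCache k σ T C₀ u) :
    k ≤ t - s := by
  classical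
  set U := C₀ ∪ (Finset.range T).image σ with hU
  set C := beladyCache k σ T C₀ s with hC
  have hCcard : C.card = k := beladyCache_card k hk σ T C₀ hcard s
  have hCne : C.Nonempty := Finset.card_pos.mp (by omega)
  set q := beladyEvict σ T s C with hq
  obtain ⟨hqC, hqmax⟩ := beladyEvict_spec σ T s C hCne
  set p := σ s with hp
  -- cache after the fault at s
  have hBs1 : beladyCache k σ T C₀ (s + 1) = insert p (C.erase q) := by
    rw [beladyCache_succ, ← hC, ← hp, ← hq, if_neg hs, if_neg (by omega)]
  -- cache stays the same until t
  have hBt : beladyCache k σ T C₀ t = insert p (C.erase q) := by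
    rw [← hBs1]
    exact beladyCache_stable k σ T C₀ (s + 1) t (by omega)
      (fun w hw hw' => hmid w (by omega) hw')
  -- the universe is exactly insert p C
  have hpU : p ∈ U := Finset.mem_union_right _
    (Finset.mem_image.mpr ⟨s, Finset.mem_range.mpr (by omega), rfl⟩)
  have hCU : C ⊆ U := beladyCache_subset k σ T C₀ s (by omega)
  have hsub : insert p C ⊆ U := Finset.insert_subset hpU hCU
  have hcard2 : (insert p C).card = k + 1 := by
    rw [Finset.card_insert_of_notMem hs, hCcard]
  have hUeq : insert p C = U :=
    Finset.eq_of_subset_of_card_le hsub (by omega)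
  -- σ t = q
  have hσtU : σ t ∈ U := Finset.mem_union_right _
    (Finset.mem_image.mpr ⟨t, Finset.mem_range.mpr htT, rfl⟩)
  have hσt : σ t = q := by
    rw [← hUeq] at hσtU
    rw [hBt] at ht
    rcases Finset.mem_insert.mp hσtU with h | h
    · exact absurd (by rw [h]; exact Finset.mem_insert_self p _) ht
    · by_contra hne
      exact ht (Finset.mem_insert_of_mem (Finset.mem_erase.mpr ⟨hne, h⟩))
  -- nextReq at s+1 of q is at most t
  have hqle : nextReq σ T (s + 1) q ≤ (t : ℕ∞) :=
    (nextReq_le_iff σ T (s + 1) q t).mpr ⟨t, by omega, htT, hσt, le_refl t⟩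
  -- every page of C.erase q is requested in [s+1, t)
  have hreq : C.erase q ⊆ (Finset.Ico (s + 1) t).image σ := by
    intro r hr
    obtain ⟨hrq, hrC⟩ := Finset.mem_erase.mp hr
    have hle : nextReq σ T (s + 1) r ≤ (t : ℕ∞) := (hqmax r hrC).trans hqle
    obtain ⟨u, hu1, hu2, hu3, hu4⟩ := (nextReq_le_iff σ T (s + 1) r t).mp hle
    have hut : u ≠ t := fun h => hrq (by rw [← hu3, h, hσt])
    exact Finset.mem_image.mpr ⟨u, Finset.mem_Ico.mpr ⟨hu1, by omega⟩, hu3⟩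
  have hcount : k - 1 ≤ t - (s + 1) := by
    have h1 : (C.erase q).card = k - 1 := by
      rw [Finset.card_erase_of_mem hqC, hCcard]
    have h2 : ((Finset.Ico (s + 1) t).image σ).card ≤ t - (s + 1) := by
      calc ((Finset.Ico (s + 1) t).image σ).card ≤ (Finset.Ico (s + 1) t).card :=
            Finset.card_image_le
        _ = t - (s + 1) := Nat.card_Ico _ _
    exact h1 ▸ (Finset.card_le_card hreq).trans h2
  omega

/-- If any two adjacent elements of a finite set of naturals differ by at least `k`,
then the maximum is at least `(card - 1) * k`. -/
lemma max_ge_of_gaps (k : ℕ) : ∀ (n : ℕ) (S : Finset ℕ), S.card = n →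
    (∀ s ∈ S, ∀ t ∈ S, s < t → (∀ u ∈ S, ¬(s < u ∧ u < t)) → s + k ≤ t) →
    ∀ hS : S.Nonempty, (n - 1) * k ≤ S.max' hS := by
  intro n
  induction n with
  | zero => intro S hc _ hS; simp
  | succ n ih =>
    intro S hc hgap hS
    rcases Nat.eq_zero_or_pos n with hn | hn
    · simp [hn]
    · set M := S.max' hS with hM
      have hMS : M ∈ S := S.max'_mem hS
      set S' := S.erase M with hS'
      have hc' : S'.card = n := by
        rw [hS', Finset.card_erase_of_mem hMS, hc]
        omega
      have hS'ne : S'.Nonempty := Finset.card_pos.mp (by omega)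
      have hsub : S' ⊆ S := Finset.erase_subset _ _
      have hgap' : ∀ s ∈ S', ∀ t ∈ S', s < t →
          (∀ u ∈ S', ¬(s < u ∧ u < t)) → s + k ≤ t := by
        intro s hsS t htS hlt hbet
        apply hgap s (hsub hsS) t (hsub htS) hlt
        intro u huS ⟨h1, h2⟩
        rcases eq_or_ne u M with rfl | hne
        · exact absurd (S.le_max' t (hsub htS)) (by omega)
        · exact hbet u (Finset.mem_erase.mpr ⟨hne, huS⟩) ⟨h1, h2⟩
      have hIH := ih S' hc' hgap' hS'ne
      set M' := S'.max' hS'ne with hM'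
      have hM'S' : M' ∈ S' := S'.max'_mem hS'ne
      have hM'ne : M' ≠ M := (Finset.mem_erase.mp hM'S').1
      have hM'lt : M' < M :=
        lt_of_le_of_ne (S.le_max' M' (hsub hM'S')) hM'ne
      have hadj : M' + k ≤ M := by
        apply hgap M' (hsub hM'S') M hMS hM'lt
        intro u huS ⟨h1, h2⟩
        have hu : u ∈ S' := Finset.mem_erase.mpr ⟨by omega, huS⟩
        exact absurd (S'.le_max' u hu) (by omega)
      have key : (n + 1 - 1) * k = (n - 1) * k + k := by
        cases n with
        | zero => omega
        | succ m =>
          rw [Nat.add_sub_cancel, Nat.add_sub_cancel, Nat.succ_mul]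
      omega

/-- Let `k ≥ 1` and let `σ` be a request sequence of length `T` such that, together with
the initial full cache `C₀` of `k` pages, at most `k + 1` distinct pages appear.  If the
Bélády policy faults at two consecutive fault times `s < t` then `t - s ≥ k`;
consequently it faults at most `⌈T/k⌉ = (T + k - 1)/k` times.  (Times are 0-based: the
request at time `u` is `σ u`, and it is a fault when `σ u ∉ beladyCache k σ T C₀ u`.) -/
theorem stmt9 (k : ℕ) (hk : 1 ≤ k) (σ : ℕ → ℕ) (T : ℕ)
    (C₀ : Finset ℕ) (hcard : C₀.card = k)
    (hpages : (C₀ ∪ (Finset.range T).image σ).card ≤ k + 1) :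
    (∀ s t : ℕ, s < t → t < T →
      σ s ∉ beladyCache k σ T C₀ s → σ t ∉ beladyCache k σ T C₀ t →
      (∀ u, s < u → u < t → σ u ∈ beladyCache k σ T C₀ u) →
      k ≤ t - s) ∧
    {t | t < T ∧ σ t ∉ beladyCache k σ T C₀ t}.ncard ≤ (T + k - 1) / k := by
  classical
  have hgap := belady_gap k hk σ T C₀ hcard hpages
  refine ⟨hgap, ?_⟩
  set F : Finset ℕ := (Finset.range T).filter (fun t => σ t ∉ beladyCache k σ T C₀ t)
    with hF
  have hset : {t | t < T ∧ σ t ∉ beladyCache k σ T C₀ t} = (F : Set ℕ) := by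
    ext u
    simp [hF, Finset.mem_filter, Finset.mem_range]
  rw [hset, Set.ncard_coe_finset]
  rcases F.eq_empty_or_nonempty with hFe | hFne
  · simp [hFe]
  · have hFgap : ∀ s ∈ F, ∀ t ∈ F, s < t → (∀ u ∈ F, ¬(s < u ∧ u < t)) → s + k ≤ t := by
      intro s hsF t htF hlt hbet
      rw [hF, Finset.mem_filter, Finset.mem_range] at hsF htF
      have hk2 : k ≤ t - s := by
        apply hgap s t hlt htF.1 hsF.2 htF.2
        intro u hu1 hu2
        by_contra hfault
        refine hbet u ?_ ⟨hu1, hu2⟩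
        rw [hF, Finset.mem_filter, Finset.mem_range]
        exact ⟨by omega, hfault⟩
      omega
    have hmax := max_ge_of_gaps k F.card F rfl hFgap hFne
    have hmaxlt : F.max' hFne < T :=
      Finset.mem_range.mp (Finset.mem_filter.mp (F.max'_mem hFne)).1
    have hT1 : 1 ≤ T := by omega
    have h1 : (F.card - 1) * k ≤ T - 1 := by omega
    have h2 : F.card - 1 ≤ (T - 1) / k :=
      (Nat.le_div_iff_mul_le (by omega)).mpr h1
    have h3 : (T - 1) / k + 1 = (T - 1 + k) / k := (Nat.add_div_right _ (by omega)).symm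
    have h4 : T + k - 1 = T - 1 + k := by omega
    have h5 : (T + k - 1) / k = (T - 1 + k) / k := by rw [h4]
    omega
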